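/- arXiv:1207.5488 — 4 statements merged into one kernel-verified Lean document; each statement's English description precedes it below -/
import Mathlib

section
/- Let G be a categorical group with object group G = Obj(𝐆) and let H = ker s ⊆ Mor(𝐆) be the kernel of the source homomorphism. Define τ : H → G by τ(θ) = t(θ) (the target map restricted to H), and α : G → Aut(H) by α(g)(θ) = 1_g · θ · 1_{g⁻¹}. Then (G, H, α, τ) is a crossed module: τ(α(g)h) = g τ(h) g⁻¹ and α(τ(h))(h') = h h' h⁻¹ for all g ∈ G and h, h' ∈ H. -/
/-- A categorical group: a category whose objects and morphisms form groups,
with source, target and identity-assigning maps being group homomorphisms,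
satisfying the exchange law coming from functoriality of the product. -/
structure CatGroup (O M : Type*) [Group O] [Group M] where
  s : M →* O
  t : M →* O
  e : O →* M
  s_e : ∀ x, s (e x) = x
  t_e : ∀ x, t (e x) = x
  comp : M → M → M
  s_comp : ∀ g f, t f = s g → s (comp g f) = s f
  t_comp : ∀ g f, t f = s g → t (comp g f) = t g
  comp_e : ∀ f, comp f (e (s f)) = f
  e_comp : ∀ f, comp (e (t f)) f = f
  comp_assoc : ∀ f g h, t f = s g → t g = s h →
    comp h (comp g f) = comp (comp h g) f
  exchange : ∀ f f' g g', t f' = s f → t g' = s g →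
    comp (f * g) (f' * g') = comp f f' * comp g g'

/-!
Composing with identities, a morphism `x` out of `1` and a morphism `y` into `1` both equal
`comp x y` by the exchange law, read once as `x * y` and once as `y * x`; so `ker s` and `ker t`
commute elementwise. The Peiffer identity is this fact applied to `h'` and `h⁻¹ * 1_{t h}`, which
lies in `ker t`.
-/

namespace CatGroup

variable {O M : Type*} [Group O] [Group M] (K : CatGroup O M)

lemma comp_e_one {f : M} (hf : K.s f = 1) : K.comp f (K.e 1) = f := by
  simpa [hf] using K.comp_e f

lemma e_one_comp {f : M} (hf : K.t f = 1) : K.comp (K.e 1) f = f := by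
  simpa [hf] using K.e_comp f

lemma commute_of_s_eq_one_of_t_eq_one {x y : M} (hx : K.s x = 1) (hy : K.t y = 1) :
    Commute x y := by
  have hxy : x * y = K.comp x y := by
    calc x * y = K.comp x (K.e 1) * K.comp (K.e 1) y := by rw [K.comp_e_one hx, K.e_one_comp hy]
      _ = K.comp (x * K.e 1) (K.e 1 * y) := (K.exchange _ _ _ _ (by simp [hx])
          (by simp [hy])).symm
      _ = K.comp x y := by simp
  have hyx : y * x = K.comp x y := by
    calc y * x = K.comp (K.e 1) y * K.comp x (K.e 1) := by rw [K.comp_e_one hx, K.e_one_comp hy]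
      _ = K.comp (K.e 1 * x) (y * K.e 1) := (K.exchange _ _ _ _ (by simp [hy])
          (by simp [hx])).symm
      _ = K.comp x y := by simp
  exact hxy.trans hyx.symm

lemma e_t_mul_mul_e_t_inv (h : M) {h' : M} (hh' : K.s h' = 1) :
    K.e (K.t h) * h' * K.e (K.t h)⁻¹ = h * h' * h⁻¹ := by
  have hc : h' * (h⁻¹ * K.e (K.t h)) = h⁻¹ * K.e (K.t h) * h' :=
    K.commute_of_s_eq_one_of_t_eq_one hh' (by simp [K.t_e])
  rw [map_inv, mul_inv_eq_iff_eq_mul]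
  calc K.e (K.t h) * h' = h * (h⁻¹ * K.e (K.t h) * h') := by group
    _ = h * h' * h⁻¹ * K.e (K.t h) := by rw [← hc]; group

end CatGroup

/-- From a categorical group one gets a crossed module: with `H = ker s`,
`τ = t|_H` and `α(g)θ = 1_g·θ·1_{g⁻¹}`, the Peiffer identities hold:
`τ(α(g)h) = g·τ(h)·g⁻¹` and `α(τ(h))(h') = h·h'·h⁻¹` for `h, h' ∈ ker s`. -/
theorem stmt4 {O M : Type*} [Group O] [Group M] (K : CatGroup O M) :
    ∀ (g : O) (h h' : M), K.s h = 1 → K.s h' = 1 →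
      K.t (K.e g * h * K.e (g⁻¹)) = g * K.t h * g⁻¹ ∧
      K.e (K.t h) * h' * K.e ((K.t h)⁻¹) = h * h' * h⁻¹ := by
  intro g h _ _ hh'
  exact ⟨by simp [K.t_e], K.e_t_mul_mul_e_t_inv h hh'⟩
end

section
/- Let ρ be a right action of a categorical group Z on a category P (a functor P × Z → P that is a right action on objects and on morphisms), with the action on morphisms free. If F, H ∈ Mor(P) with H ∘ F defined, and F' = ρ(F, φ), H' = ρ(H, ψ) for some φ, ψ ∈ Mor(Z) such that H' ∘ F' is also defined, then ψ ∘ φ is defined in Mor(Z) and H' ∘ F' = ρ(H ∘ F, ψ ∘ φ); in particular H' ∘ F' lies in the Mor(Z)-orbit of H ∘ F. -/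
/-- A (small, set-based) category: sets of objects and morphisms with
source, target, identity and composition maps. `comp g f` means `g ∘ f`. -/
structure PreCat (O M : Type*) where
  s : M → O
  t : M → O
  e : O → M
  s_e : ∀ x, s (e x) = x
  t_e : ∀ x, t (e x) = x
  comp : M → M → M
  s_comp : ∀ g f, t f = s g → s (comp g f) = s f
  t_comp : ∀ g f, t f = s g → t (comp g f) = t g
  comp_e : ∀ f, comp f (e (s f)) = f
  e_comp : ∀ f, comp (e (t f)) f = f
  comp_assoc : ∀ f g h, t f = s g → t g = s h →
    comp h (comp g f) = comp (comp h g) f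

/-- A right action of a categorical group `Z` on a category `P`: a functor
`P × Z → P` that is a right group action on objects and on morphisms. -/
structure CatAction {PO PM ZO ZM : Type*} [Group ZO] [Group ZM]
    (P : PreCat PO PM) (Z : CatGroup ZO ZM) where
  objAct : PO → ZO → PO
  morAct : PM → ZM → PM
  objAct_one : ∀ p, objAct p 1 = p
  objAct_mul : ∀ p z z', objAct p (z * z') = objAct (objAct p z) z'
  morAct_one : ∀ F, morAct F 1 = F
  morAct_mul : ∀ F φ φ', morAct F (φ * φ') = morAct (morAct F φ) φ'
  s_act : ∀ F φ, P.s (morAct F φ) = objAct (P.s F) (Z.s φ)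
  t_act : ∀ F φ, P.t (morAct F φ) = objAct (P.t F) (Z.t φ)
  e_act : ∀ p z, morAct (P.e p) (Z.e z) = P.e (objAct p z)
  comp_act : ∀ F H φ ψ, P.t F = P.s H → Z.t φ = Z.s ψ →
    morAct (P.comp H F) (Z.comp ψ φ) = P.comp (morAct H ψ) (morAct F φ)

theorem CatAction.t_eq_s_of_comp_defined {PO PM ZO ZM : Type*} [Group ZO] [Group ZM]
    {P : PreCat PO PM} {Z : CatGroup ZO ZM} (A : CatAction P Z)
    (hObjFree : ∀ p z z', A.objAct p z = A.objAct p z' → z = z')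
    {F H : PM} {φ ψ : ZM} (hc : P.t F = P.s H)
    (hc' : P.t (A.morAct F φ) = P.s (A.morAct H ψ)) :
    Z.t φ = Z.s ψ := by
  rw [A.t_act, A.s_act, hc] at hc'
  exact hObjFree _ _ _ hc'

theorem stmt10_general {PO PM ZO ZM : Type*} [Group ZO] [Group ZM]
    (P : PreCat PO PM) (Z : CatGroup ZO ZM) (A : CatAction P Z)
    (hObjFree : ∀ p z z', A.objAct p z = A.objAct p z' → z = z')
    (F H F' H' : PM) (φ ψ : ZM)
    (hc : P.t F = P.s H)
    (hF' : F' = A.morAct F φ) (hH' : H' = A.morAct H ψ)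
    (hc' : P.t F' = P.s H') :
    Z.t φ = Z.s ψ ∧
    P.comp H' F' = A.morAct (P.comp H F) (Z.comp ψ φ) ∧
    ∃ χ : ZM, P.comp H' F' = A.morAct (P.comp H F) χ := by
  subst hF' hH'
  have hts : Z.t φ = Z.s ψ := A.t_eq_s_of_comp_defined hObjFree hc hc'
  have hcomp := (A.comp_act F H φ ψ hc hts).symm
  exact ⟨hts, hcomp, Z.comp ψ φ, hcomp⟩

/-- If `H ∘ F` is defined, `F' = F·φ`, `H' = H·ψ` and `H' ∘ F'` is defined, then
`ψ ∘ φ` is defined and `H' ∘ F' = (H ∘ F)·(ψ ∘ φ)`; in particular `H' ∘ F'` lies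
in the `Mor(Z)`-orbit of `H ∘ F`. -/
theorem stmt10 {PO PM ZO ZM : Type*} [Group ZO] [Group ZM]
    (P : PreCat PO PM) (Z : CatGroup ZO ZM) (A : CatAction P Z)
    (hObjFree : ∀ p z z', A.objAct p z = A.objAct p z' → z = z')
    (hMorFree : ∀ F φ φ', A.morAct F φ = A.morAct F φ' → φ = φ')
    (F H F' H' : PM) (φ ψ : ZM)
    (hc : P.t F = P.s H)
    (hF' : F' = A.morAct F φ) (hH' : H' = A.morAct H ψ)
    (hc' : P.t F' = P.s H') :
    Z.t φ = Z.s ψ ∧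
    P.comp H' F' = A.morAct (P.comp H F) (Z.comp ψ φ) ∧
    ∃ χ : ZM, P.comp H' F' = A.morAct (P.comp H F) χ :=
  stmt10_general P Z A hObjFree F H F' H' φ ψ hc hF' hH' hc'
end

section
/- Let ρ be a right action of a categorical group Z on a category P, free on both objects and morphisms. Then there is a well-defined quotient category B with Obj(B) = Obj(P)/Obj(Z) and Mor(B) = Mor(P)/Mor(Z), with composition given by [H] ∘ [F] = [H ∘ F], and the quotient functor π : P → B together with the action of Z makes π a principal categorical bundle: π is surjective on objects and morphisms, the action is free, and it is transitive on each fiber π⁻¹(b) of objects and each fiber π⁻¹(φ) of morphisms. -/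
/-- The `Obj(Z)`-orbit relation on objects of `P`. -/
def objRel {PO PM ZO ZM : Type*} [Group ZO] [Group ZM]
    {P : PreCat PO PM} {Z : CatGroup ZO ZM} (A : CatAction P Z) :
    PO → PO → Prop := fun p q => ∃ z, A.objAct p z = q

/-- The `Mor(Z)`-orbit relation on morphisms of `P`. -/
def morRel {PO PM ZO ZM : Type*} [Group ZO] [Group ZM]
    {P : PreCat PO PM} {Z : CatGroup ZO ZM} (A : CatAction P Z) :
    PM → PM → Prop := fun F G => ∃ φ, A.morAct F φ = G

/-!
Freeness on objects is what makes composition descend to the quotient: if `F, H` are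
composable and so are `F ⋅ φ, H ⋅ ψ`, then `t φ` and `s ψ` act in the same way on the object
`t F = s H`, hence coincide, and the axiom `comp_act` identifies `(H ⋅ ψ) ∘ (F ⋅ φ)` with
`(H ∘ F) ⋅ (ψ ∘ φ)`. Any class with target `[p]` has a representative with target exactly
`p` (translate by an identity morphism `e z`), so composable classes have composable
representatives and the category axioms of `B` are inherited from `P`.
-/

namespace CatAction

variable {PO PM ZO ZM : Type*} [Group ZO] [Group ZM]
  {P : PreCat PO PM} {Z : CatGroup ZO ZM} (A : CatAction P Z)

theorem objRel_equivalence : Equivalence (objRel A) where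
  refl p := ⟨1, A.objAct_one p⟩
  symm := by
    rintro p _ ⟨z, rfl⟩
    exact ⟨z⁻¹, by rw [← A.objAct_mul, mul_inv_cancel, A.objAct_one]⟩
  trans := by
    rintro p _ _ ⟨z, rfl⟩ ⟨w, rfl⟩
    exact ⟨z * w, A.objAct_mul p z w⟩

theorem morRel_equivalence : Equivalence (morRel A) where
  refl F := ⟨1, A.morAct_one F⟩
  symm := by
    rintro F _ ⟨φ, rfl⟩
    exact ⟨φ⁻¹, by rw [← A.morAct_mul, mul_inv_cancel, A.morAct_one]⟩
  trans := by
    rintro F _ _ ⟨φ, rfl⟩ ⟨ψ, rfl⟩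
    exact ⟨φ * ψ, A.morAct_mul F φ ψ⟩

theorem objRel_of_mk_eq {p q : PO} (h : Quot.mk (objRel A) p = Quot.mk (objRel A) q) :
    objRel A p q :=
  (A.objRel_equivalence.quot_mk_eq_iff p q).mp h

theorem morRel_of_mk_eq {F G : PM} (h : Quot.mk (morRel A) F = Quot.mk (morRel A) G) :
    morRel A F G :=
  (A.morRel_equivalence.quot_mk_eq_iff F G).mp h

def quotS : Quot (morRel A) → Quot (objRel A) :=
  Quot.lift (fun F => Quot.mk _ (P.s F)) fun F _ ⟨φ, hφ⟩ =>
    Quot.sound ⟨Z.s φ, by rw [← hφ, A.s_act]⟩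

def quotT : Quot (morRel A) → Quot (objRel A) :=
  Quot.lift (fun F => Quot.mk _ (P.t F)) fun F _ ⟨φ, hφ⟩ =>
    Quot.sound ⟨Z.t φ, by rw [← hφ, A.t_act]⟩

def quotE : Quot (objRel A) → Quot (morRel A) :=
  Quot.lift (fun p => Quot.mk _ (P.e p)) fun p _ ⟨z, hz⟩ =>
    Quot.sound ⟨Z.e z, by rw [← hz, A.e_act]⟩

theorem exists_rep_of_quotT_eq {a : Quot (morRel A)} {p : PO}
    (h : A.quotT a = Quot.mk _ p) : ∃ F, Quot.mk (morRel A) F = a ∧ P.t F = p := by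
  induction a using Quot.ind with | _ F =>
  obtain ⟨z, hz⟩ := A.objRel_of_mk_eq h
  exact ⟨A.morAct F (Z.e z), Quot.sound ⟨Z.e z, rfl⟩ |>.symm, by rw [A.t_act, Z.t_e, hz]⟩

theorem t_eq_s_of_composable_act (hfree : ∀ p z z', A.objAct p z = A.objAct p z' → z = z')
    {F H : PM} {φ ψ : ZM} (h : P.t F = P.s H)
    (hact : P.t (A.morAct F φ) = P.s (A.morAct H ψ)) : Z.t φ = Z.s ψ :=
  hfree (P.t F) _ _ (by rw [← A.t_act, hact, A.s_act, h])

theorem mk_comp_eq (hfree : ∀ p z z', A.objAct p z = A.objAct p z' → z = z')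
    {F H F' H' : PM} (hF : Quot.mk (morRel A) F = Quot.mk (morRel A) F')
    (hH : Quot.mk (morRel A) H = Quot.mk (morRel A) H') (h : P.t F = P.s H)
    (h' : P.t F' = P.s H') :
    Quot.mk (morRel A) (P.comp H F) = Quot.mk (morRel A) (P.comp H' F') := by
  obtain ⟨φ, rfl⟩ := A.morRel_of_mk_eq hF
  obtain ⟨ψ, rfl⟩ := A.morRel_of_mk_eq hH
  exact Quot.sound ⟨Z.comp ψ φ,
    A.comp_act F H φ ψ h (A.t_eq_s_of_composable_act hfree h h')⟩

open Classical in
/-- On non-composable pairs the value is irrelevant; we return the first argument. -/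
noncomputable def quotComp (b a : Quot (morRel A)) : Quot (morRel A) :=
  if h : ∃ HF : PM × PM, Quot.mk (morRel A) HF.1 = b ∧ Quot.mk (morRel A) HF.2 = a ∧
      P.t HF.2 = P.s HF.1 then
    Quot.mk (morRel A) (P.comp h.choose.1 h.choose.2)
  else b

theorem quotComp_mk (hfree : ∀ p z z', A.objAct p z = A.objAct p z' → z = z')
    {F H : PM} (h : P.t F = P.s H) :
    A.quotComp (Quot.mk _ H) (Quot.mk _ F) = Quot.mk (morRel A) (P.comp H F) := by
  have hex : ∃ HF : PM × PM, Quot.mk (morRel A) HF.1 = Quot.mk _ H ∧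
      Quot.mk (morRel A) HF.2 = Quot.mk _ F ∧ P.t HF.2 = P.s HF.1 := ⟨(H, F), rfl, rfl, h⟩
  obtain ⟨hH, hF, hc⟩ := hex.choose_spec
  rw [quotComp, dif_pos hex]
  exact A.mk_comp_eq hfree hF hH hc h

noncomputable def quotCat (hfree : ∀ p z z', A.objAct p z = A.objAct p z' → z = z') :
    PreCat (Quot (objRel A)) (Quot (morRel A)) where
  s := A.quotS
  t := A.quotT
  e := A.quotE
  s_e := Quot.ind fun p => congrArg (Quot.mk _) (P.s_e p)
  t_e := Quot.ind fun p => congrArg (Quot.mk _) (P.t_e p)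
  comp := A.quotComp
  s_comp g f hfg := by
    induction g using Quot.ind with | _ G =>
    obtain ⟨F, rfl, hFG⟩ := A.exists_rep_of_quotT_eq hfg
    rw [A.quotComp_mk hfree hFG]
    exact congrArg (Quot.mk _) (P.s_comp G F hFG)
  t_comp g f hfg := by
    induction g using Quot.ind with | _ G =>
    obtain ⟨F, rfl, hFG⟩ := A.exists_rep_of_quotT_eq hfg
    rw [A.quotComp_mk hfree hFG]
    exact congrArg (Quot.mk _) (P.t_comp G F hFG)
  comp_e := Quot.ind fun F => by
    rw [show A.quotE (A.quotS (Quot.mk _ F)) = Quot.mk _ (P.e (P.s F)) from rfl,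
      A.quotComp_mk hfree (P.t_e _), P.comp_e]
  e_comp := Quot.ind fun F => by
    rw [show A.quotE (A.quotT (Quot.mk _ F)) = Quot.mk _ (P.e (P.t F)) from rfl,
      A.quotComp_mk hfree (P.s_e _).symm, P.e_comp]
  comp_assoc f g h hfg hgh := by
    induction h using Quot.ind with | _ H =>
    obtain ⟨G, rfl, hGH⟩ := A.exists_rep_of_quotT_eq hgh
    obtain ⟨F, rfl, hFG⟩ := A.exists_rep_of_quotT_eq hfg
    have hF_GH : P.t F = P.s (P.comp H G) := by rw [P.s_comp H G hGH, hFG]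
    have hFG_H : P.t (P.comp G F) = P.s H := by rw [P.t_comp G F hFG, hGH]
    rw [A.quotComp_mk hfree hFG, A.quotComp_mk hfree hGH, A.quotComp_mk hfree hF_GH,
      A.quotComp_mk hfree hFG_H, P.comp_assoc F G H hFG hGH]

end CatAction

theorem stmt11_general {PO PM ZO ZM : Type*} [Group ZO] [Group ZM]
    (P : PreCat PO PM) (Z : CatGroup ZO ZM) (A : CatAction P Z)
    (hObjFree : ∀ p z z', A.objAct p z = A.objAct p z' → z = z') :
    ∃ B : PreCat (Quot (objRel A)) (Quot (morRel A)),
      (∀ F : PM, B.s (Quot.mk (morRel A) F) = Quot.mk (objRel A) (P.s F)) ∧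
      (∀ F : PM, B.t (Quot.mk (morRel A) F) = Quot.mk (objRel A) (P.t F)) ∧
      (∀ p : PO, B.e (Quot.mk (objRel A) p) = Quot.mk (morRel A) (P.e p)) ∧
      (∀ F H : PM, P.t F = P.s H →
        B.comp (Quot.mk (morRel A) H) (Quot.mk (morRel A) F)
          = Quot.mk (morRel A) (P.comp H F)) ∧
      Function.Surjective (Quot.mk (objRel A)) ∧
      Function.Surjective (Quot.mk (morRel A)) ∧
      (∀ p q : PO, Quot.mk (objRel A) p = Quot.mk (objRel A) q →
        ∃ z, A.objAct p z = q) ∧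
      (∀ F G : PM, Quot.mk (morRel A) F = Quot.mk (morRel A) G →
        ∃ φ, A.morAct F φ = G) :=
  ⟨A.quotCat hObjFree, fun _ => rfl, fun _ => rfl, fun _ => rfl,
    fun _ _ h => A.quotComp_mk hObjFree h, Quot.mk_surjective, Quot.mk_surjective,
    fun _ _ h => A.objRel_of_mk_eq h, fun _ _ h => A.morRel_of_mk_eq h⟩

/-- Given a free right action of a categorical group `Z` on a category `P`, there is a
well-defined quotient category `B` with objects `Obj(P)/Obj(Z)` and morphisms
`Mor(P)/Mor(Z)`, composition `[H] ∘ [F] = [H ∘ F]`, and the quotient functor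
`π : P → B` together with the action makes `π` a principal categorical bundle:
`π` is surjective on objects and morphisms, and the (free) action is transitive on
each object fiber and each morphism fiber. -/
theorem stmt11 {PO PM ZO ZM : Type*} [Group ZO] [Group ZM]
    (P : PreCat PO PM) (Z : CatGroup ZO ZM) (A : CatAction P Z)
    (hObjFree : ∀ p z z', A.objAct p z = A.objAct p z' → z = z')
    (hMorFree : ∀ F φ φ', A.morAct F φ = A.morAct F φ' → φ = φ') :
    ∃ B : PreCat (Quot (objRel A)) (Quot (morRel A)),
      (∀ F : PM, B.s (Quot.mk (morRel A) F) = Quot.mk (objRel A) (P.s F)) ∧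
      (∀ F : PM, B.t (Quot.mk (morRel A) F) = Quot.mk (objRel A) (P.t F)) ∧
      (∀ p : PO, B.e (Quot.mk (objRel A) p) = Quot.mk (morRel A) (P.e p)) ∧
      (∀ F H : PM, P.t F = P.s H →
        B.comp (Quot.mk (morRel A) H) (Quot.mk (morRel A) F)
          = Quot.mk (morRel A) (P.comp H F)) ∧
      Function.Surjective (Quot.mk (objRel A)) ∧
      Function.Surjective (Quot.mk (morRel A)) ∧
      (∀ p q : PO, Quot.mk (objRel A) p = Quot.mk (objRel A) q →
        ∃ z, A.objAct p z = q) ∧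
      (∀ F G : PM, Quot.mk (morRel A) F = Quot.mk (morRel A) G →
        ∃ φ, A.morAct F φ = G) :=
  stmt11_general P Z A hObjFree
end

section
/- In the decorated path category, the right action of morphisms φ of the categorical group (given by (γ̃, θ)·φ = (γ̃·s(φ), φ⁻¹·θ·1_{s(φ)})) is functorial with respect to composition: for composable φ₂ ∘ φ₁ in the categorical group and composable decorated morphisms, ((γ̃₂, θ₂) ∘ (γ̃₁, θ₁))·(φ₂ ∘ φ₁) = ((γ̃₂, θ₂)·φ₂) ∘ ((γ̃₁, θ₁)·φ₁). -/
/-!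
In a categorical group the exchange law forces `g ∘ f = f · 1_{t f}⁻¹ · g` and makes
`ker t` commute with `ker s`. The path component of the identity is then the compatibility of the
right action with composition, since `t(φ₁) · t(φ₁⁻¹ θ₁ 1_{s φ₁}) = t(θ₁) s(φ₁)`. For the group
component, `(φ₂ ∘ φ₁)⁻¹ = φ₂⁻¹ 1_{t φ₁} φ₁⁻¹`, and `θ₂ ∈ ker s` commutes with
`1_{t φ₁} φ₁⁻¹ ∈ ker t`, which moves `θ₂` to where the right-hand side has it.
-/

namespace CatGroup

variable {O M : Type*} [Group O] [Group M] (K : CatGroup O M)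

lemma comp_one_of_s_eq_one {χ : M} (hχ : K.s χ = 1) : K.comp χ 1 = χ := by
  simpa [hχ] using K.comp_e χ

lemma one_comp_of_t_eq_one {ψ : M} (hψ : K.t ψ = 1) : K.comp 1 ψ = ψ := by
  simpa [hψ] using K.e_comp ψ

lemma comp_eq_mul {g f : M} (h : K.t f = K.s g) :
    K.comp g f = f * (K.e (K.t f))⁻¹ * g := by
  have hs : K.s ((K.e (K.t f))⁻¹ * g) = 1 := by simp [K.s_e, h]
  calc K.comp g f = K.comp (K.e (K.t f) * ((K.e (K.t f))⁻¹ * g)) (f * 1) := by group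
    _ = K.comp (K.e (K.t f)) f * K.comp ((K.e (K.t f))⁻¹ * g) 1 :=
      K.exchange _ _ _ _ (K.s_e _).symm (by simp [hs])
    _ = f * (K.e (K.t f))⁻¹ * g := by
      rw [K.e_comp, K.comp_one_of_s_eq_one hs, mul_assoc]

/-- Eckmann–Hilton: both products equal `χ ∘ ψ` by the exchange law. -/
lemma commute_of_t_eq_one_of_s_eq_one {ψ χ : M} (hψ : K.t ψ = 1) (hχ : K.s χ = 1) :
    Commute ψ χ := by
  have hcomp : K.t ψ = K.s χ := hψ.trans hχ.symm
  have h := K.comp_eq_mul hcomp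
  rw [hψ, map_one, inv_one, mul_one] at h
  calc ψ * χ = K.comp χ ψ := h.symm
    _ = K.comp (χ * 1) (1 * ψ) := by group
    _ = K.comp χ 1 * K.comp 1 ψ := K.exchange _ _ _ _ (by simp [hχ]) (by simp [hψ])
    _ = χ * ψ := by rw [K.comp_one_of_s_eq_one hχ, K.one_comp_of_t_eq_one hψ]

lemma inv_comp_mul_mul_e_s {φ₁ φ₂ θ₁ θ₂ : M} (hθ₂ : K.s θ₂ = 1) (hφ : K.s φ₂ = K.t φ₁) :
    (K.comp φ₂ φ₁)⁻¹ * (θ₂ * θ₁) * K.e (K.s (K.comp φ₂ φ₁))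
      = (φ₂⁻¹ * θ₂ * K.e (K.s φ₂)) * (φ₁⁻¹ * θ₁ * K.e (K.s φ₁)) := by
  have hker : K.t (K.e (K.t φ₁) * φ₁⁻¹) = 1 := by simp [K.t_e]
  have hθ₂_comm : K.e (K.t φ₁) * φ₁⁻¹ * θ₂ = θ₂ * (K.e (K.t φ₁) * φ₁⁻¹) :=
    K.commute_of_t_eq_one_of_s_eq_one hker hθ₂
  rw [K.s_comp φ₂ φ₁ hφ.symm, K.comp_eq_mul hφ.symm, hφ]
  calc (φ₁ * (K.e (K.t φ₁))⁻¹ * φ₂)⁻¹ * (θ₂ * θ₁) * K.e (K.s φ₁)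
      = φ₂⁻¹ * (K.e (K.t φ₁) * φ₁⁻¹ * θ₂) * θ₁ * K.e (K.s φ₁) := by group
    _ = φ₂⁻¹ * θ₂ * K.e (K.t φ₁) * (φ₁⁻¹ * θ₁ * K.e (K.s φ₁)) := by rw [hθ₂_comm]; group

end CatGroup

theorem stmt15_general {O M PO PM : Type*} [Group O] [Group M]
    (K : CatGroup O M) (P : PreCat PO PM)
    (actO : PO → O → PO) (actM : PM → O → PM)
    (actO_one : ∀ x, actO x (1 : O) = x)
    (actO_mul : ∀ x g g', actO x (g * g') = actO (actO x g) g')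
    (actM_mul : ∀ f g g', actM f (g * g') = actM (actM f g) g')
    (s_act : ∀ f g, P.s (actM f g) = actO (P.s f) g)
    (comp_act : ∀ f₁ f₂ g, P.t f₁ = P.s f₂ →
      actM (P.comp f₂ f₁) g = P.comp (actM f₂ g) (actM f₁ g))
    (γ₁ γ₂ : PM) (θ₁ θ₂ φ₁ φ₂ : M)
    (hθ₂ : K.s θ₂ = 1)
    (hφ : K.s φ₂ = K.t φ₁)
    (hc : actO (P.t γ₁) ((K.t θ₁)⁻¹) = P.s γ₂) :
    (actM (P.comp (actM γ₂ (K.t θ₁)) γ₁) (K.s (K.comp φ₂ φ₁)),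
      (K.comp φ₂ φ₁)⁻¹ * (θ₂ * θ₁) * K.e (K.s (K.comp φ₂ φ₁)))
    = (P.comp
        (actM (actM γ₂ (K.s φ₂)) (K.t (φ₁⁻¹ * θ₁ * K.e (K.s φ₁))))
        (actM γ₁ (K.s φ₁)),
      (φ₂⁻¹ * θ₂ * K.e (K.s φ₂)) * (φ₁⁻¹ * θ₁ * K.e (K.s φ₁))) := by
  have hcomposable : P.t γ₁ = P.s (actM γ₂ (K.t θ₁)) := by
    rw [s_act, ← hc, ← actO_mul, inv_mul_cancel, actO_one]
  have hshift : K.s φ₂ * K.t (φ₁⁻¹ * θ₁ * K.e (K.s φ₁)) = K.t θ₁ * K.s φ₁ := by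
    simp only [hφ, map_mul, map_inv, K.t_e]
    group
  refine Prod.ext ?_ (K.inv_comp_mul_mul_e_s hθ₂ hφ)
  rw [K.s_comp φ₂ φ₁ hφ.symm, comp_act _ _ _ hcomposable, ← actM_mul, ← actM_mul, hshift]

/-- Functoriality of the decorated right action: with decorated morphisms `(γ̃, θ)`
(`θ ∈ ker s ⊆ Mor(K)`), action `(γ̃, θ)·φ = (γ̃·s(φ), φ⁻¹·θ·1_{s(φ)})` and
composition `(γ̃₂, θ₂) ∘ (γ̃₁, θ₁) = (γ̃₂·t(θ₁) ∘ γ̃₁, θ₂θ₁)`, one has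
`((γ̃₂, θ₂) ∘ (γ̃₁, θ₁))·(φ₂ ∘ φ₁) = ((γ̃₂, θ₂)·φ₂) ∘ ((γ̃₁, θ₁)·φ₁)`
for composable `φ₂ ∘ φ₁` and composable decorated morphisms. -/
theorem stmt15 {O M PO PM : Type*} [Group O] [Group M]
    (K : CatGroup O M) (P : PreCat PO PM)
    (actO : PO → O → PO) (actM : PM → O → PM)
    (actO_one : ∀ x, actO x (1 : O) = x)
    (actO_mul : ∀ x g g', actO x (g * g') = actO (actO x g) g')
    (actM_one : ∀ f, actM f (1 : O) = f)
    (actM_mul : ∀ f g g', actM f (g * g') = actM (actM f g) g')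
    (s_act : ∀ f g, P.s (actM f g) = actO (P.s f) g)
    (t_act : ∀ f g, P.t (actM f g) = actO (P.t f) g)
    (comp_act : ∀ f₁ f₂ g, P.t f₁ = P.s f₂ →
      actM (P.comp f₂ f₁) g = P.comp (actM f₂ g) (actM f₁ g))
    (γ₁ γ₂ : PM) (θ₁ θ₂ φ₁ φ₂ : M)
    (hθ₁ : K.s θ₁ = 1) (hθ₂ : K.s θ₂ = 1)
    (hφ : K.s φ₂ = K.t φ₁)
    (hc : actO (P.t γ₁) ((K.t θ₁)⁻¹) = P.s γ₂) :
    (actM (P.comp (actM γ₂ (K.t θ₁)) γ₁) (K.s (K.comp φ₂ φ₁)),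
      (K.comp φ₂ φ₁)⁻¹ * (θ₂ * θ₁) * K.e (K.s (K.comp φ₂ φ₁)))
    = (P.comp
        (actM (actM γ₂ (K.s φ₂)) (K.t (φ₁⁻¹ * θ₁ * K.e (K.s φ₁))))
        (actM γ₁ (K.s φ₁)),
      (φ₂⁻¹ * θ₂ * K.e (K.s φ₂)) * (φ₁⁻¹ * θ₁ * K.e (K.s φ₁))) :=
  stmt15_general K P actO actM actO_one actO_mul actM_mul s_act comp_act γ₁ γ₂ θ₁ θ₂ φ₁ φ₂ hθ₂ hφ hc
end
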